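/- arXiv:2501.08146 — 4 statements merged into one kernel-verified Lean document; each statement's English description precedes it below -/
import Mathlib

section
/- Let F : ℝⁿ → ℝ be μ-strongly convex (μ > 0) with minimizer x*. Consider the τ-step proximal point iteration x^{(k+1)} = prox_{βF}(Σ_{i=1}^τ ξ_i x^{(k-τ+i)}) with β > 0, Σ_{i=1}^τ ξ_i = 1 and ξ_i ≥ 0 for all i. Then ‖x^{(k)} - x*‖ ≤ (1/(1+βμ))^{⌊k/τ⌋} · max_{0 ≤ j ≤ τ-1} ‖x^{(j)} - x*‖. -/
/-!
The proximal map `y ↦ prox_{βF}(y)` of a `μ`-strongly convex `F` is a `1 / (1 + βμ)`-contraction: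
the prox objective `F + ‖· - y‖² / (2β)` is `(μ + 1/β)`-strongly convex, so it grows quadratically
away from its minimiser, and adding this growth bound for two centres `y, y'` cancels `F` and
leaves `(1 + βμ) ‖p - q‖² ≤ ⟪p - q, y - y'⟫`. Since `x*` is its own proximal point, and the
distance of a convex combination to `x*` is at most the weighted average of the distances, the
error of each iterate is at most `1 / (1 + βμ)` times the worst error in the preceding window of
`τ` iterates; after every `τ` steps the whole window has gained another factor.
-/

open Set Filter Topology

section

variable {E : Type*} [NormedAddCommGroup E] {f : E → ℝ}

def IsProxPoint (F : E → ℝ) (β : ℝ) (y p : E) : Prop :=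
  IsMinOn (fun z => F z + 1 / (2 * β) * ‖z - y‖ ^ 2) univ p

lemma IsMinOn.isProxPoint_self {β : ℝ} {x : E} (hx : IsMinOn f univ x) (hβ : 0 ≤ β) :
    IsProxPoint f β x x :=
  isMinOn_univ_iff.2 fun z => by
    rw [sub_self, norm_zero, zero_pow two_ne_zero, mul_zero, add_zero]
    exact (isMinOn_univ_iff.1 hx z).trans (le_add_of_nonneg_right (by positivity))

variable [NormedSpace ℝ E] {s : Set E} {m n : ℝ} {g : E → ℝ}

lemma StrongConvexOn.add (hf : StrongConvexOn s m f) (hg : StrongConvexOn s n g) :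
    StrongConvexOn s (m + n) (f + g) :=
  (UniformConvexOn.add hf hg).mono fun r => le_of_eq (by simp only [Pi.add_apply]; ring)

lemma StrongConvexOn.add_sq_norm_le_of_isMinOn (hf : StrongConvexOn s m f) {w v : E}
    (hw : IsMinOn f s w) (hws : w ∈ s) (hvs : v ∈ s) :
    f w + m / 2 * ‖v - w‖ ^ 2 ≤ f v := by
  have hseg : ∀ t ∈ Ioo (0 : ℝ) 1, (1 - t) * (m / 2 * ‖v - w‖ ^ 2) ≤ f v - f w := by
    rintro t ⟨ht0, ht1⟩
    have hconv := hf.2 hvs hws ht0.le (sub_nonneg.2 ht1.le) (add_sub_cancel t 1)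
    have hmin := hw (hf.1 hvs hws ht0.le (sub_nonneg.2 ht1.le) (add_sub_cancel t 1))
    simp only [smul_eq_mul] at hconv
    refine le_of_mul_le_mul_left ?_ ht0
    linarith [show f w ≤ f (t • v + (1 - t) • w) from hmin]
  have hlim : Tendsto (fun t : ℝ => (1 - t) * (m / 2 * ‖v - w‖ ^ 2)) (𝓝[>] 0)
      (𝓝 (m / 2 * ‖v - w‖ ^ 2)) := by
    have : Continuous fun t : ℝ => (1 - t) * (m / 2 * ‖v - w‖ ^ 2) := by fun_prop
    simpa using (this.tendsto 0).mono_left nhdsWithin_le_nhds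
  have := le_of_tendsto hlim (eventually_of_mem (Ioo_mem_nhdsGT one_pos) hseg)
  linarith

lemma norm_sum_smul_sub_le {ι : Type*} {t : Finset ι} {w : ι → ℝ} {z : ι → E} (c : E)
    (h₀ : ∀ i ∈ t, 0 ≤ w i) (h₁ : ∑ i ∈ t, w i = 1) :
    ‖∑ i ∈ t, w i • z i - c‖ ≤ ∑ i ∈ t, w i * ‖z i - c‖ := by
  have hsub : ∑ i ∈ t, w i • z i - c = ∑ i ∈ t, w i • (z i - c) := by
    simp only [smul_sub, Finset.sum_sub_distrib, ← Finset.sum_smul, h₁, one_smul]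
  rw [hsub]
  simpa using convexOn_univ_norm.map_sum_le h₀ h₁ fun i _ => mem_univ (z i - c)

end

section

variable {E : Type*} [NormedAddCommGroup E] [InnerProductSpace ℝ E]

lemma strongConvexOn_mul_sq_norm_sub {s : Set E} (hs : Convex ℝ s) (c : ℝ) (y : E) :
    StrongConvexOn s c fun z => c / 2 * ‖z - y‖ ^ 2 := by
  rw [strongConvexOn_iff_convex]
  have : (fun z => c / 2 * ‖z - y‖ ^ 2 - c / 2 * ‖z‖ ^ 2) =
      fun z => c / 2 * ‖y‖ ^ 2 - innerₛₗ ℝ (c • y) z := by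
    funext z
    rw [innerₛₗ_apply_apply, real_inner_smul_left, norm_sub_sq_real, real_inner_comm]
    ring
  rw [this]
  exact (convexOn_const _ hs).sub ((innerₛₗ ℝ (c • y)).concaveOn hs)

variable {F : E → ℝ} {μ β : ℝ}

lemma StrongConvexOn.norm_sub_le_of_isProxPoint (hF : StrongConvexOn univ μ F) (hμ : 0 ≤ μ)
    (hβ : 0 < β) {y y' p q : E} (hp : IsProxPoint F β y p) (hq : IsProxPoint F β y' q) :
    ‖p - q‖ ≤ 1 / (1 + β * μ) * ‖y - y'‖ := by
  have hG : ∀ y : E, StrongConvexOn univ (μ + β⁻¹) fun z => F z + 1 / (2 * β) * ‖z - y‖ ^ 2 :=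
    fun y => by
      convert hF.add (strongConvexOn_mul_sq_norm_sub convex_univ β⁻¹ y) using 2 with z
      simp only [Pi.add_apply]
      ring
  have h₁ := (hG y).add_sq_norm_le_of_isMinOn hp (mem_univ p) (mem_univ q)
  have h₂ := (hG y').add_sq_norm_le_of_isMinOn hq (mem_univ q) (mem_univ p)
  -- Adding the two quadratic-growth bounds cancels the values of `F`.
  have hpar : ‖q - y‖ ^ 2 + ‖p - y'‖ ^ 2 - ‖p - y‖ ^ 2 - ‖q - y'‖ ^ 2 =
      2 * inner ℝ (p - q) (y - y') := by
    simp only [norm_sub_sq_real, inner_sub_left, inner_sub_right, real_inner_comm]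
    ring
  have hsum : (μ + β⁻¹) * ‖p - q‖ ^ 2 ≤ β⁻¹ * inner ℝ (p - q) (y - y') := by
    rw [norm_sub_rev q p] at h₁
    linear_combination h₁ + h₂ + β⁻¹ / 2 * hpar
  have hkey : (1 + β * μ) * ‖p - q‖ ^ 2 ≤ ‖p - q‖ * ‖y - y'‖ := by
    refine le_trans ?_ (real_inner_le_norm (p - q) (y - y'))
    have := mul_le_mul_of_nonneg_left hsum hβ.le
    rwa [mul_inv_cancel_left₀ hβ.ne', ← mul_assoc, mul_add, mul_inv_cancel₀ hβ.ne',
      add_comm] at this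
  have hpos : 0 < 1 + β * μ := by positivity
  rw [one_div_mul_eq_div, le_div_iff₀ hpos]
  nlinarith [norm_nonneg (p - q), norm_nonneg (y - y')]

end

lemma le_pow_div_mul_of_le_mul_sum {τ : ℕ} (hτ : 0 < τ) {ρ M : ℝ} (hρ₀ : 0 ≤ ρ) (hρ₁ : ρ ≤ 1)
    (hM : 0 ≤ M) {ξ : ℕ → ℝ} (hξ₀ : ∀ i ∈ Finset.Icc 1 τ, 0 ≤ ξ i)
    (hξ₁ : ∑ i ∈ Finset.Icc 1 τ, ξ i = 1) {e : ℕ → ℝ} (hinit : ∀ j < τ, e j ≤ M)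
    (hstep : ∀ k, τ ≤ k + 1 → e (k + 1) ≤ ρ * ∑ i ∈ Finset.Icc 1 τ, ξ i * e (k + i - τ))
    (k : ℕ) : e k ≤ ρ ^ (k / τ) * M := by
  induction k using Nat.strong_induction_on with
  | _ k ih =>
    rcases lt_or_ge k τ with hk | hk
    · rw [Nat.div_eq_of_lt hk, pow_zero, one_mul]
      exact hinit k hk
    obtain ⟨k, rfl⟩ : ∃ j, k = j + 1 := ⟨k - 1, by omega⟩
    -- Every term of the window `k + 1 - τ, …, k` has already lost `(k + 1) / τ - 1` factors `ρ`.
    have hwindow : ∀ i ∈ Finset.Icc 1 τ, e (k + i - τ) ≤ ρ ^ ((k + 1 - τ) / τ) * M := by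
      intro i hi
      rw [Finset.mem_Icc] at hi
      refine (ih _ (by omega)).trans (mul_le_mul_of_nonneg_right ?_ hM)
      exact pow_le_pow_of_le_one hρ₀ hρ₁ (Nat.div_le_div_right (by omega))
    have hdiv : (k + 1) / τ = (k + 1 - τ) / τ + 1 := by
      rw [← Nat.add_div_right _ hτ, Nat.sub_add_cancel hk]
    calc e (k + 1) ≤ ρ * ∑ i ∈ Finset.Icc 1 τ, ξ i * e (k + i - τ) := hstep k hk
      _ ≤ ρ * ∑ i ∈ Finset.Icc 1 τ, ξ i * (ρ ^ ((k + 1 - τ) / τ) * M) := by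
        gcongr with i hi
        exacts [hξ₀ i hi, hwindow i hi]
      _ = ρ ^ ((k + 1) / τ) * M := by
        rw [← Finset.sum_mul, hξ₁, hdiv, pow_succ]
        ring

theorem stmt6 (n : ℕ) (τ : ℕ) (hτ : 1 ≤ τ) (μ β : ℝ) (hμ : 0 < μ) (hβ : 0 < β)
    (ξ : ℕ → ℝ) (hξsum : ∑ i ∈ Finset.Icc 1 τ, ξ i = 1) (hξpos : ∀ i, 0 ≤ ξ i)
    (F : EuclideanSpace ℝ (Fin n) → ℝ)
    (hsc : StrongConvexOn Set.univ μ F)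
    (xstar : EuclideanSpace ℝ (Fin n))
    (hmin : IsMinOn F Set.univ xstar)
    (x : ℕ → EuclideanSpace ℝ (Fin n))
    (hiter : ∀ k, τ ≤ k + 1 →
      IsMinOn (fun z => F z +
        1 / (2 * β) * ‖z - ∑ i ∈ Finset.Icc 1 τ, ξ i • x (k + i - τ)‖ ^ 2)
        Set.univ (x (k + 1))) :
    ∀ k, ‖x k - xstar‖ ≤ (1 / (1 + β * μ)) ^ (k / τ) *
      (Finset.range τ).sup' (Finset.nonempty_range_iff.mpr (by omega))
        (fun j => ‖x j - xstar‖) := by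
  have hρ₁ : 1 / (1 + β * μ) ≤ 1 :=
    div_le_one_of_le₀ (le_add_of_nonneg_right (by positivity)) (by positivity)
  have hM : 0 ≤ (Finset.range τ).sup' (Finset.nonempty_range_iff.mpr (by omega))
      (fun j => ‖x j - xstar‖) :=
    (norm_nonneg _).trans (Finset.le_sup' (fun j => ‖x j - xstar‖) (Finset.mem_range.2 hτ))
  refine le_pow_div_mul_of_le_mul_sum (e := fun k => ‖x k - xstar‖) hτ (by positivity) hρ₁ hM
    (fun i _ => hξpos i) hξsum
    (fun j hj => Finset.le_sup' (fun j => ‖x j - xstar‖) (Finset.mem_range.2 hj)) fun k hk => ?_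
  calc ‖x (k + 1) - xstar‖
      ≤ 1 / (1 + β * μ) * ‖∑ i ∈ Finset.Icc 1 τ, ξ i • x (k + i - τ) - xstar‖ :=
        hsc.norm_sub_le_of_isProxPoint hμ.le hβ (hiter k hk) (hmin.isProxPoint_self hβ.le)
    _ ≤ 1 / (1 + β * μ) * ∑ i ∈ Finset.Icc 1 τ, ξ i * ‖x (k + i - τ) - xstar‖ := by
        gcongr
        exact norm_sum_smul_sub_le xstar (fun i _ => hξpos i) hξsum
end

section
/- Let F : ℝⁿ → ℝ be differentiable and μ-convex (μ ∈ ℝ, possibly negative). Suppose x^{(k+1)} = prox_{βF}(x̃^{(k)}) where x̃^{(k)} = Σ_{i=1}^τ ξ_i x^{(k-τ+i)}. Then F(x^{(k)}) ≥ F(x^{(k+1)}) + (β/2)‖∇F(x^{(k+1)})‖² + (1/(2β) + μ/2)‖x^{(k+1)} − x^{(k)}‖² − (1/(2β))‖Σ_{i=1}^{τ-1} ξ_i (x^{(k-τ+i)} − x^{(k)})‖², assuming Σ_{i=1}^τ ξ_i = 1. -/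
/-!
The first-order optimality condition of the proximal step is `β ∇F(x⁺) = x̃ - x⁺`, so
`x̃ - x = β ∇F(x⁺) + (x⁺ - x)`. Expanding `‖x̃ - x‖² / (2β)` by the polarization identity
produces exactly the terms `β/2 ‖∇F(x⁺)‖² + ⟪∇F(x⁺), x⁺ - x⟫ + ‖x⁺ - x‖² / (2β)`, and the
inner product is controlled by `μ`-convexity between `x⁺` and `x`. Finally, since the weights
sum to one, `x̃ - x = ∑ ξᵢ (x_{k-τ+i} - x)`, whose last term vanishes.
-/

open scoped RealInnerProductSpace

section

variable {E : Type*} [NormedAddCommGroup E] [InnerProductSpace ℝ E]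

theorem smul_gradient_eq_sub_of_isLocalMin_prox [CompleteSpace E] {F : E → ℝ} {g p c : E}
    {β : ℝ} (hβ : β ≠ 0) (hF : HasGradientAt F g p)
    (hmin : IsLocalMin (fun z => F z + 1 / (2 * β) * ‖z - c‖ ^ 2) p) :
    β • g = c - p := by
  have hderiv := (hasGradientAt_iff_hasFDerivAt.mp hF).add
    ((((hasFDerivAt_id p).sub_const c).norm_sq).const_mul (1 / (2 * β)))
  have horth : ∀ v, ⟪β • g + (p - c), v⟫ = 0 := fun v => by
    have := DFunLike.congr_fun (hmin.hasFDerivAt_eq_zero hderiv) v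
    simp only [one_div, mul_inv_rev, id_eq, map_sub, ContinuousLinearMap.comp_id,
      add_apply, InnerProductSpace.toDual_apply_apply,
      smul_apply, sub_apply, coe_innerSL_apply,
      nsmul_eq_mul, Nat.cast_ofNat, smul_eq_mul, zero_apply] at this
    rw [inner_add_left, real_inner_smul_left, inner_sub_left]
    field_simp at this
    linarith
  rw [← sub_eq_zero, ← inner_self_eq_zero (𝕜 := ℝ)]
  convert horth (β • g - (c - p)) using 2
  abel

theorem descent_of_prox_step {F : E → ℝ} {μ β : ℝ} (hβ : 0 < β) {g p q c : E}
    (hstep : β • g = c - p) (hconv : F q ≥ F p + ⟪g, q - p⟫ + μ / 2 * ‖q - p‖ ^ 2) :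
    F q ≥ F p + β / 2 * ‖g‖ ^ 2 + (1 / (2 * β) + μ / 2) * ‖p - q‖ ^ 2
      - 1 / (2 * β) * ‖c - q‖ ^ 2 := by
  have hcq : c - q = β • g + (p - q) := by rw [hstep]; abel
  have hexpand : 1 / (2 * β) * ‖c - q‖ ^ 2
      = β / 2 * ‖g‖ ^ 2 + ⟪g, p - q⟫ + 1 / (2 * β) * ‖p - q‖ ^ 2 := by
    rw [hcq, norm_add_sq_real, real_inner_smul_left, norm_smul, Real.norm_of_nonneg hβ.le]
    field_simp
  rw [norm_sub_rev q p, ← neg_sub p q, inner_neg_right] at hconv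
  linarith

end

theorem sum_Icc_smul_sub_eq_sum_Icc_pred {R M : Type*} [Ring R] [AddCommGroup M] [Module R M]
    (ξ : ℕ → R) (v : ℕ → M) (τ : ℕ) (hξ : ∑ i ∈ Finset.Icc 1 τ, ξ i = 1) :
    ∑ i ∈ Finset.Icc 1 τ, ξ i • v i - v τ
      = ∑ i ∈ Finset.Icc 1 (τ - 1), ξ i • (v i - v τ) := by
  have hcenter : ∑ i ∈ Finset.Icc 1 τ, ξ i • v i - v τ
      = ∑ i ∈ Finset.Icc 1 τ, ξ i • (v i - v τ) := by
    simp only [smul_sub, Finset.sum_sub_distrib, ← Finset.sum_smul, hξ, one_smul]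
  rw [hcenter]
  cases τ with
  | zero => rfl
  | succ m => simp [Finset.sum_Icc_succ_top (Nat.le_add_left 1 m)]

theorem stmt11_general (n : ℕ) (τ : ℕ) (μ β : ℝ) (hβ : 0 < β)
    (ξ : ℕ → ℝ) (hξsum : ∑ i ∈ Finset.Icc 1 τ, ξ i = 1)
    (F : EuclideanSpace ℝ (Fin n) → ℝ) (hF : Differentiable ℝ F)
    (hμc : ∀ x y, F y ≥ F x + ⟪gradient F x, y - x⟫ + μ / 2 * ‖y - x‖ ^ 2)
    (x : ℕ → EuclideanSpace ℝ (Fin n)) (k : ℕ)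
    (hprox : IsMinOn (fun z => F z +
        1 / (2 * β) * ‖z - ∑ i ∈ Finset.Icc 1 τ, ξ i • x (k + i - τ)‖ ^ 2)
      Set.univ (x (k + 1))) :
    F (x k) ≥ F (x (k + 1)) + β / 2 * ‖gradient F (x (k + 1))‖ ^ 2
      + (1 / (2 * β) + μ / 2) * ‖x (k + 1) - x k‖ ^ 2
      - 1 / (2 * β) * ‖∑ i ∈ Finset.Icc 1 (τ - 1), ξ i • (x (k + i - τ) - x k)‖ ^ 2 := by
  have hstep := smul_gradient_eq_sub_of_isLocalMin_prox hβ.ne' (hF _).hasGradientAt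
    (hprox.isLocalMin Filter.univ_mem)
  have hsum := sum_Icc_smul_sub_eq_sum_Icc_pred ξ (fun i => x (k + i - τ)) τ hξsum
  simp only [Nat.add_sub_cancel] at hsum
  rw [← hsum]
  exact descent_of_prox_step hβ hstep (hμc _ _)

theorem stmt11 (n : ℕ) (τ : ℕ) (hτ : 1 ≤ τ) (μ β : ℝ) (hβ : 0 < β)
    (ξ : ℕ → ℝ) (hξsum : ∑ i ∈ Finset.Icc 1 τ, ξ i = 1)
    (F : EuclideanSpace ℝ (Fin n) → ℝ) (hF : Differentiable ℝ F)
    (hμc : ∀ x y, F y ≥ F x + ⟪gradient F x, y - x⟫ + μ / 2 * ‖y - x‖ ^ 2)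
    (x : ℕ → EuclideanSpace ℝ (Fin n)) (k : ℕ) (hk : τ ≤ k + 1)
    (hprox : IsMinOn (fun z => F z +
        1 / (2 * β) * ‖z - ∑ i ∈ Finset.Icc 1 τ, ξ i • x (k + i - τ)‖ ^ 2)
      Set.univ (x (k + 1))) :
    F (x k) ≥ F (x (k + 1)) + β / 2 * ‖gradient F (x (k + 1))‖ ^ 2
      + (1 / (2 * β) + μ / 2) * ‖x (k + 1) - x k‖ ^ 2
      - 1 / (2 * β) * ‖∑ i ∈ Finset.Icc 1 (τ - 1), ξ i • (x (k + i - τ) - x k)‖ ^ 2 :=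
  stmt11_general n τ μ β hβ ξ hξsum F hF hμc x k hprox
end

section
/- Fix τ ≥ 2, coefficients ξ_1, …, ξ_{τ-1} ∈ ℝ, and points x^{(k+1)}, …, x^{(k+τ)} ∈ ℝⁿ. Then ‖Σ_{i=1}^{τ-1} ξ_i (x^{(k+i)} − x^{(k+τ)})‖² ≤ (τ−1) · Σ_{j=1}^{τ-1} (Σ_{i=1}^{j} (τ−i) ξ_i²) · ‖x^{(k+j)} − x^{(k+j+1)}‖². -/
/-! Apply `‖∑ aᵢ‖² ≤ N ∑ ‖aᵢ‖²` to the outer sum, then again to each `x (k + i) - x (k + τ)` written as a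
telescoping sum of `τ - i` consecutive differences; exchanging the order of the resulting double sum
collects the weights `(τ - i) ξᵢ²` in front of each consecutive difference. -/

open Finset

theorem norm_sum_sq_le_card_mul_sum_norm_sq {ι E : Type*} [SeminormedAddCommGroup E]
    (s : Finset ι) (f : ι → E) : ‖∑ i ∈ s, f i‖ ^ 2 ≤ #s * ∑ i ∈ s, ‖f i‖ ^ 2 :=
  (pow_le_pow_left₀ (norm_nonneg _) (norm_sum_le s f) 2).trans (sq_sum_le_card_mul_sum_sq ..)

theorem norm_sub_sq_le_mul_sum_norm_sub_sq {E : Type*} [SeminormedAddCommGroup E]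
    (y : ℕ → E) {i j : ℕ} (hij : i ≤ j) :
    ‖y j - y i‖ ^ 2 ≤ ((j : ℝ) - i) * ∑ l ∈ Ico i j, ‖y (l + 1) - y l‖ ^ 2 := by
  simpa [sum_Ico_sub y hij, Nat.cast_sub hij] using
    norm_sum_sq_le_card_mul_sum_norm_sq (Ico i j) fun l => y (l + 1) - y l

theorem norm_sum_smul_sub_sq_le {E : Type*} [SeminormedAddCommGroup E] [NormedSpace ℝ E]
    (ξ : ℕ → ℝ) (y : ℕ → E) (m : ℕ) :
    ‖∑ i ∈ Icc 1 m, ξ i • (y i - y (m + 1))‖ ^ 2 ≤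
      m * ∑ j ∈ Icc 1 m, (∑ i ∈ Icc 1 j, ((m + 1 : ℝ) - i) * ξ i ^ 2) *
        ‖y j - y (j + 1)‖ ^ 2 := by
  calc _ ≤ m * ∑ i ∈ Icc 1 m, ξ i ^ 2 * ‖y (m + 1) - y i‖ ^ 2 := by
        simpa [norm_smul, mul_pow, norm_sub_rev] using
          norm_sum_sq_le_card_mul_sum_norm_sq (Icc 1 m) fun i => ξ i • (y i - y (m + 1))
    _ ≤ m * ∑ i ∈ Icc 1 m, ξ i ^ 2 *
          ((((m + 1 : ℕ) : ℝ) - i) * ∑ j ∈ Ico i (m + 1), ‖y (j + 1) - y j‖ ^ 2) := by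
        gcongr with i hi
        exact norm_sub_sq_le_mul_sum_norm_sub_sq y (by grind)
    _ = _ := by
        congr 1
        simp_rw [mul_sum, sum_mul]
        rw [sum_comm' (t' := Icc 1 m) (s' := fun j => Icc 1 j) (by grind)]
        push_cast
        refine sum_congr rfl fun j _ => sum_congr rfl fun i _ => ?_
        rw [norm_sub_rev]
        ring

theorem stmt12_general (n : ℕ) (τ : ℕ) (ξ : ℕ → ℝ)
    (x : ℕ → EuclideanSpace ℝ (Fin n)) (k : ℕ) :
    ‖∑ i ∈ Finset.Icc 1 (τ - 1), ξ i • (x (k + i) - x (k + τ))‖ ^ 2 ≤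
      ((τ : ℝ) - 1) * ∑ j ∈ Finset.Icc 1 (τ - 1),
        (∑ i ∈ Finset.Icc 1 j, ((τ : ℝ) - i) * ξ i ^ 2) *
          ‖x (k + j) - x (k + j + 1)‖ ^ 2 := by
  cases τ with
  | zero => simp
  | succ m =>
    simpa [← add_assoc] using norm_sum_smul_sub_sq_le ξ (fun i => x (k + i)) m

theorem stmt12 (n : ℕ) (τ : ℕ) (hτ : 2 ≤ τ) (ξ : ℕ → ℝ)
    (x : ℕ → EuclideanSpace ℝ (Fin n)) (k : ℕ) :
    ‖∑ i ∈ Finset.Icc 1 (τ - 1), ξ i • (x (k + i) - x (k + τ))‖ ^ 2 ≤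
      ((τ : ℝ) - 1) * ∑ j ∈ Finset.Icc 1 (τ - 1),
        (∑ i ∈ Finset.Icc 1 j, ((τ : ℝ) - i) * ξ i ^ 2) *
          ‖x (k + j) - x (k + j + 1)‖ ^ 2 :=
  stmt12_general n τ ξ x k
end

section
/- For fixed θ > 0, the one-dimensional function F(x) = log(1 + |x|/θ) can be written as F = g + h where h(x) = |x|/θ is convex and g(x) = log(1 + |x|/θ) − |x|/θ is differentiable with θ⁻²-Lipschitz derivative. -/
open Real Asymptotics Filter Topology

lemma aux_hasDerivAt (θ : ℝ) (hθ : 0 < θ) (x : ℝ) :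
    HasDerivAt (fun x => Real.log (1 + |x| / θ) - |x| / θ)
      (-x / (θ * (θ + |x|))) x := by
  rcases eq_or_ne x 0 with rfl | hx
  · -- derivative 0 at 0
    simp only [neg_zero, zero_div]
    rw [hasDerivAt_iff_isLittleO]
    simp only [sub_zero, abs_zero, zero_div, add_zero, Real.log_one, smul_zero]
    have hbound : ∀ y : ℝ, ‖Real.log (1 + |y| / θ) - |y| / θ - 0‖ ≤ θ⁻¹ ^ 2 * ‖y ^ 2‖ := by
      intro y
      have ht : 0 ≤ |y| / θ := by positivity
      set t := |y| / θ with htdef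
      have h1 : Real.log (1 + t) ≤ t := by
        have := Real.log_le_sub_one_of_pos (by linarith : (0:ℝ) < 1 + t)
        linarith
      have h2 : t - t ^ 2 ≤ Real.log (1 + t) := by
        have hpos : (0:ℝ) < 1 + t := by linarith
        have := Real.log_le_sub_one_of_pos (show (0:ℝ) < (1 + t)⁻¹ by positivity)
        rw [Real.log_inv] at this
        have h3 : (1 + t)⁻¹ - 1 = -t / (1 + t) := by field_simp; ring
        have h4 : -Real.log (1 + t) ≤ -t / (1 + t) := by linarith
        have h5 : t / (1 + t) ≤ Real.log (1 + t) := by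
          have := neg_le_neg h4; simpa [neg_div] using this
        have h6 : t - t ^ 2 ≤ t / (1 + t) := by
          rw [div_eq_mul_inv, ← sub_nonneg]
          have : t * (1 + t)⁻¹ - (t - t ^ 2) = t ^ 2 * t * (1+t)⁻¹ := by
            field_simp; ring
          rw [this]; positivity
        linarith
      rw [sub_zero, Real.norm_eq_abs, abs_sub_comm, abs_of_nonneg (by linarith)]
      have : t - Real.log (1 + t) ≤ t ^ 2 := by linarith
      calc t - Real.log (1 + t) ≤ t ^ 2 := this
        _ = θ⁻¹ ^ 2 * ‖y ^ 2‖ := by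
            rw [htdef]
            rw [Real.norm_eq_abs, div_pow, sq_abs]
            rw [abs_of_nonneg (sq_nonneg y)]
            field_simp
    have hO : (fun y => Real.log (1 + |y| / θ) - |y| / θ - 0) =O[𝓝 0] (fun y : ℝ => y ^ 2) :=
      Asymptotics.IsBigO.of_bound _ (Filter.Eventually.of_forall hbound)
    have ho : (fun y : ℝ => y ^ 2) =o[𝓝 0] (fun y : ℝ => y) := by
      have h1 : (fun y : ℝ => y) =o[𝓝 (0:ℝ)] (fun _ => (1:ℝ)) := by
        rw [Asymptotics.isLittleO_one_iff]
        exact Filter.tendsto_id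
      have := h1.mul_isBigO (Asymptotics.isBigO_refl (fun y : ℝ => y) (𝓝 0))
      simpa [pow_two] using this
    simpa [sub_zero] using hO.trans_isLittleO ho
  · have habs : HasDerivAt (fun y : ℝ => |y|) ((SignType.sign x : ℝ)) x := hasDerivAt_abs hx
    set s : ℝ := (SignType.sign x : ℝ) with hs
    have hpos : (0:ℝ) < 1 + |x| / θ := by positivity
    have hinner : HasDerivAt (fun y : ℝ => 1 + |y| / θ) (s / θ) x := by
      simpa [div_eq_mul_inv] using ((habs.div_const θ).const_add 1)
    have hlog : HasDerivAt (fun y : ℝ => Real.log (1 + |y| / θ))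
        ((1 + |x| / θ)⁻¹ * (s / θ)) x :=
      HasDerivAt.comp (h₂ := Real.log) x (Real.hasDerivAt_log (ne_of_gt hpos)) hinner
    have hsub := hlog.sub (habs.div_const θ)
    refine hsub.congr_deriv (Eq.symm ?_)
    have hsx : s * |x| = x := by
      rcases lt_or_gt_of_ne hx with h | h
      · simp [hs, h, abs_of_neg h]
      · simp [hs, h, abs_of_pos h]
    have hθx : θ + |x| ≠ 0 := by positivity
    rcases lt_or_gt_of_ne hx with h | h
    · have hs1 : s = -1 := by simp [hs, h]
      rw [hs1, abs_of_neg h]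
      have h2 : θ + -x ≠ 0 := ne_of_gt (by linarith)
      field_simp [h2]
      ring
    · have hs1 : s = 1 := by simp [hs, h]
      rw [hs1, abs_of_pos h]
      field_simp
      ring

theorem stmt14 (θ : ℝ) (hθ : 0 < θ)
    (g : ℝ → ℝ) (hg : g = fun x => Real.log (1 + |x| / θ) - |x| / θ) :
    (∀ x, Real.log (1 + |x| / θ) = g x + |x| / θ) ∧
    ConvexOn ℝ Set.univ (fun x : ℝ => |x| / θ) ∧
    Differentiable ℝ g ∧
    (∀ x y, |deriv g x - deriv g y| ≤ θ⁻¹ ^ 2 * |x - y|) := by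
  have hD : ∀ x, HasDerivAt g (-x / (θ * (θ + |x|))) x := by
    rw [hg]; exact aux_hasDerivAt θ hθ
  refine ⟨fun x => by rw [hg]; ring, ?_, fun x => (hD x).differentiableAt, ?_⟩
  · have h := convexOn_univ_norm (E := ℝ)
    have := h.smul (le_of_lt (inv_pos.mpr hθ))
    refine this.congr (fun x _ => ?_)
    simp [Real.norm_eq_abs, smul_eq_mul, div_eq_inv_mul]
  · intro x y
    rw [(hD x).deriv, (hD y).deriv]
    have hax : (0:ℝ) < θ + |x| := by positivity
    have hay : (0:ℝ) < θ + |y| := by positivity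
    have key : abs (x * |y| - y * |x|) ≤ (|x| + |y|) * |x - y| := by
      rcases abs_cases x with ⟨hx, hx'⟩ | ⟨hx, hx'⟩ <;>
        rcases abs_cases y with ⟨hy, hy'⟩ | ⟨hy, hy'⟩ <;>
        rcases abs_cases (x - y) with ⟨hxy, hxy'⟩ | ⟨hxy, hxy'⟩ <;>
        rw [hx, hy, hxy, abs_le] <;> constructor <;> nlinarith
    have hden : (0:ℝ) < θ * (θ + |x|) * (θ + |y|) := by positivity
    have expr : -x / (θ * (θ + |x|)) - -y / (θ * (θ + |y|)) =
        (y * (θ + |x|) - x * (θ + |y|)) / (θ * (θ + |x|) * (θ + |y|)) := by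
      field_simp; ring
    rw [expr, abs_div, abs_of_pos hden, div_le_iff₀ hden]
    have step1 : |y * (θ + |x|) - x * (θ + |y|)| ≤ θ * |x - y| + (|x| + |y|) * |x - y| := by
      have hrw : y * (θ + |x|) - x * (θ + |y|) = θ * (y - x) + (y * |x| - x * |y|) := by ring
      rw [hrw]
      have h1 := abs_add_le (θ * (y - x)) (y * |x| - x * |y|)
      have h2 : |θ * (y - x)| = θ * |x - y| := by
        rw [abs_mul, abs_of_pos hθ, abs_sub_comm]
      have h3 : abs (y * |x| - x * |y|) ≤ (|x| + |y|) * |x - y| := by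
        rw [abs_sub_comm]; exact key
      linarith
    have h2 : θ⁻¹ ^ 2 * |x - y| * (θ * (θ + |x|) * (θ + |y|)) =
        |x - y| * ((θ + |x|) * (θ + |y|)) / θ := by
      field_simp
    rw [h2, le_div_iff₀ hθ]
    nlinarith [mul_nonneg (mul_nonneg (abs_nonneg x) (abs_nonneg y)) (abs_nonneg (x - y)),
      abs_nonneg (x - y), abs_nonneg x, abs_nonneg y, step1]
end
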